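/- Every Engel division ring is commutative. -/
import Mathlib


/-- Iterated Engel commutator: `engelComm x y 0 = x` and
`engelComm x y (n+1) = [engelComm x y n, y]`, so `engelComm x y n = [x,ₙy]`. -/
def engelComm {R : Type*} [NonUnitalRing R] (x y : R) : ℕ → R
  | 0 => x
  | n + 1 => engelComm x y n * y - y * engelComm x y n

private lemma engel_factor {R : Type*} [DivisionRing R] (x y : R) (hy : y ≠ 0) :
    ∀ n, engelComm x y n = (fun a => a - y * a * y⁻¹)^[n] x * y ^ n := by
  intro n
  induction n with
  | zero => simp [engelComm]
  | succ n ih =>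
      set S : R → R := fun a => a - y * a * y⁻¹ with hS
      set a := S^[n] x with ha
      have h1 : S^[n + 1] x = a - y * a * y⁻¹ := by
        rw [Function.iterate_succ_apply']
      rw [engelComm, ih, h1]
      have h2 : y⁻¹ * y ^ (n + 1) = y ^ n := by
        rw [pow_succ']
        exact inv_mul_cancel_left₀ hy _
      calc a * y ^ n * y - y * (a * y ^ n)
          = a * y ^ (n + 1) - y * a * (y⁻¹ * y ^ (n + 1)) := by
            rw [h2, pow_succ]; noncomm_ring
        _ = (a - y * a * y⁻¹) * y ^ (n + 1) := by noncomm_ring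

private lemma engel_pm {R : Type*} [DivisionRing R] (y t : R)
    (h : y * t - t * y = -y) : ∀ n, engelComm y t n = y ∨ engelComm y t n = -y := by
  intro n
  induction n with
  | zero => left; rfl
  | succ n ih =>
      rcases ih with h' | h' <;> rw [engelComm, h']
      · right; rw [h]
      · left
        have : -y * t - t * -y = -(y * t - t * y) := by noncomm_ring
        rw [this, h, neg_neg]

/-- Every Engel division ring is commutative. -/
theorem stmt5 (R : Type*) [DivisionRing R]
    (hE : ∀ x y : R, ∃ n : ℕ, engelComm x y (n + 1) = 0) :
    ∀ x y : R, x * y = y * x := by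
  intro x y
  by_contra hxy
  have hy : y ≠ 0 := by rintro rfl; simp at hxy
  set S : R → R := fun a => a - y * a * y⁻¹ with hS
  -- S is nilpotent on x
  have hP : ∃ m, S^[m] x = 0 := by
    obtain ⟨n, hn⟩ := hE x y
    refine ⟨n + 1, ?_⟩
    have := engel_factor x y hy (n + 1)
    rw [hn] at this
    have hyn : (y : R) ^ (n + 1) ≠ 0 := pow_ne_zero _ hy
    exact (mul_eq_zero.mp this.symm).resolve_right hyn
  -- S a = 0 means a commutes with y
  have hS0 : ∀ a : R, S a = 0 → y * a = a * y := by
    intro a hsa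
    have : y * a * y⁻¹ = a := by
      have := sub_eq_zero.mp hsa
      exact this.symm
    calc y * a = y * a * y⁻¹ * y := by rw [inv_mul_cancel_right₀ hy]
      _ = a * y := by rw [this]
  classical
  let m := Nat.find hP
  have hm : S^[m] x = 0 := Nat.find_spec hP
  have hmin : ∀ k < m, S^[k] x ≠ 0 := fun k hk => Nat.find_min hP hk
  have hm1 : S^[1] x ≠ 0 := by
    intro h1
    exact hxy ((hS0 x (by simpa using h1)).symm)
  have hm0 : m ≠ 0 := by
    intro h0
    rw [h0] at hm
    simp only [Function.iterate_zero, id_eq] at hm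
    rw [hm] at hxy
    simp at hxy
  have hm1' : m ≠ 1 := fun h1 => hm1 (by rw [← h1]; exact hm)
  have hm2 : 2 ≤ m := by omega
  -- set up a, d, t
  set a := S^[m - 2] x with ha
  set d := S a with hd
  have hd1 : d = S^[m - 1] x := by
    have h12 : m - 1 = (m - 2) + 1 := by omega
    rw [hd, ha, h12, Function.iterate_succ_apply']
  have hdne : d ≠ 0 := by rw [hd1]; exact hmin (m - 1) (by omega)
  have hSd : S d = 0 := by
    rw [hd1, ← Function.iterate_succ_apply' S (m - 1) x]
    have h11 : m - 1 + 1 = m := by omega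
    rw [Nat.succ_eq_add_one, h11]; exact hm
  have hyd : y * d = d * y := hS0 d hSd
  have hya : y * a = (a - d) * y := by
    have h1 : y * a * y⁻¹ = a - d := by
      have : a - y * a * y⁻¹ = d := rfl
      linear_combination (norm := noncomm_ring) -this
    calc y * a = y * a * y⁻¹ * y := by rw [inv_mul_cancel_right₀ hy]
      _ = (a - d) * y := by rw [h1]
  set t := a * d⁻¹ with ht
  have hydinv : y * d⁻¹ = d⁻¹ * y := by
    calc y * d⁻¹ = d⁻¹ * (d * y) * d⁻¹ := by
          rw [← mul_assoc, inv_mul_cancel₀ hdne, one_mul]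
      _ = d⁻¹ * (y * d) * d⁻¹ := by rw [hyd]
      _ = d⁻¹ * y * (d * d⁻¹) := by noncomm_ring
      _ = d⁻¹ * y := by rw [mul_inv_cancel₀ hdne, mul_one]
  have hyt : y * t - t * y = -y := by
    have key : y * (a * d⁻¹) = a * d⁻¹ * y - y := by
      calc y * (a * d⁻¹) = (y * a) * d⁻¹ := by rw [mul_assoc]
        _ = (a - d) * y * d⁻¹ := by rw [hya]
        _ = (a - d) * (d⁻¹ * y) := by rw [mul_assoc, hydinv]
        _ = a * (d⁻¹ * y) - d * d⁻¹ * y := by noncomm_ring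
        _ = a * d⁻¹ * y - y := by rw [mul_inv_cancel₀ hdne, one_mul, ← mul_assoc]
    rw [ht, key]; noncomm_ring
  obtain ⟨n, hn⟩ := hE y t
  rcases engel_pm y t hyt (n + 1) with h' | h' <;> rw [hn] at h'
  · exact hy h'.symm
  · exact hy (neg_eq_zero.mp h'.symm)
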